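/- Let λ = (λ₁, λ₂) be a two-row partition with λ₁ ≥ λ₂ ≥ 1. (1) If λ₁ = λ₂, then the Sprague–Grundy value of the LCTR game on λ equals 0 if λ₁ is even and 2 if λ₁ is odd. (2) If λ₁ > λ₂, then it equals 0 if λ₂ is odd and 1 if λ₂ is even. -/

import Mathlib

/-- The subpartition `λ[i,j]`: drop the first `i` rows, subtract `j` from each
remaining row, and delete all nonpositive entries. -/
def Subpart (l : List ℕ) (i j : ℕ) : List ℕ :=
  ((l.drop i).map (fun x => x - j)).filter (fun x => x ≠ 0)

/-- A partition: a nonincreasing finite list of positive integers. -/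
def IsPartition (l : List ℕ) : Prop :=
  l.Pairwise (· ≥ ·) ∧ ∀ x ∈ l, 0 < x

/-- Minimum excluded value of a finite set of naturals. -/
noncomputable def mex (s : Finset ℕ) : ℕ := sInf {n : ℕ | n ∉ s}

lemma measure_filter_le (l : List ℕ) :
    (l.filter (fun x => x ≠ 0)).sum + (l.filter (fun x => x ≠ 0)).length
      ≤ l.sum + l.length := by
  induction l with
  | nil => simp
  | cons a t ih =>
    simp only [List.filter_cons, decide_eq_true_eq, List.sum_cons, List.length_cons]
    by_cases h : a ≠ 0
    · rw [if_pos h]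
      simp only [List.sum_cons, List.length_cons]
      omega
    · rw [if_neg h]
      omega

lemma measure_mapsub_le (l : List ℕ) :
    ((l.map (fun x => x - 1)).filter (fun x => x ≠ 0)).sum
      + ((l.map (fun x => x - 1)).filter (fun x => x ≠ 0)).length ≤ l.sum := by
  induction l with
  | nil => simp
  | cons a t ih =>
    simp only [List.map_cons, List.filter_cons, decide_eq_true_eq, List.sum_cons]
    by_cases h : a - 1 ≠ 0
    · rw [if_pos h]
      simp only [List.sum_cons, List.length_cons]
      omega
    · rw [if_neg h]
      omega

lemma subpart10_lt (a : ℕ) (t : List ℕ) :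
    (Subpart (a :: t) 1 0).sum + (Subpart (a :: t) 1 0).length
      < (a :: t).sum + (a :: t).length := by
  have h : Subpart (a :: t) 1 0 = t.filter (fun x => x ≠ 0) := by
    simp [Subpart]
  rw [h]
  have := measure_filter_le t
  simp only [List.sum_cons, List.length_cons]
  omega

lemma subpart01_lt (a : ℕ) (t : List ℕ) :
    (Subpart (a :: t) 0 1).sum + (Subpart (a :: t) 0 1).length
      < (a :: t).sum + (a :: t).length := by
  have h : Subpart (a :: t) 0 1
      = ((a :: t).map (fun x => x - 1)).filter (fun x => x ≠ 0) := by
    simp [Subpart]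
  rw [h]
  have := measure_mapsub_le (a :: t)
  have hlen : 0 < (a :: t).length := by simp
  omega

/-- Sprague–Grundy values of the LCTR game. -/
noncomputable def SGL : List ℕ → ℕ
  | [] => 0
  | a :: t => mex {SGL (Subpart (a :: t) 1 0), SGL (Subpart (a :: t) 0 1)}
  termination_by l => l.sum + l.length
  decreasing_by
  · exact subpart10_lt a t
  · exact subpart01_lt a t

/-- Sprague–Grundy values of the Downright game (only meaningful on nonempty
partitions; the value on `[]` is a junk value). -/
noncomputable def SGD : List ℕ → ℕ
  | [] => 0
  | a :: t =>
      mex ((if t = [] then (∅ : Finset ℕ) else {SGD (Subpart (a :: t) 1 0)}) ∪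
           (if a ≤ 1 then (∅ : Finset ℕ) else {SGD (Subpart (a :: t) 0 1)}))
  termination_by l => l.sum + l.length
  decreasing_by
  · exact subpart10_lt a t
  · exact subpart01_lt a t

/-- Durfee length: the largest `ℓ` with `λ_ℓ ≥ ℓ`. -/
def durfee (l : List ℕ) : ℕ :=
  Nat.findGreatest (fun k => k ≤ l.getD (k - 1) 0) l.length

/-- The conjugate partition. -/
def conj (l : List ℕ) : List ℕ :=
  (List.range (l.headD 0)).map (fun i => (l.filter (fun x => i + 1 ≤ x)).length)

/-- P-positions of misère LCTR. -/
def PmLCTR : List ℕ → Prop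
  | [] => False
  | a :: t => ¬ PmLCTR (Subpart (a :: t) 1 0) ∧ ¬ PmLCTR (Subpart (a :: t) 0 1)
  termination_by l => l.sum + l.length
  decreasing_by
  · exact subpart10_lt a t
  · exact subpart01_lt a t

/-- Number of nodes in the game tree of LCTR. -/
def nodesL : List ℕ → ℕ
  | [] => 1
  | a :: t => 1 + nodesL (Subpart (a :: t) 1 0) + nodesL (Subpart (a :: t) 0 1)
  termination_by l => l.sum + l.length
  decreasing_by
  · exact subpart10_lt a t
  · exact subpart01_lt a t

/-- Number of leaves in the game tree of LCTR. -/
def leavesL : List ℕ → ℕ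
  | [] => 1
  | a :: t => leavesL (Subpart (a :: t) 1 0) + leavesL (Subpart (a :: t) 0 1)
  termination_by l => l.sum + l.length
  decreasing_by
  · exact subpart10_lt a t
  · exact subpart01_lt a t

/-- Number of nodes in the game tree of Downright (junk value `0` on `[]`). -/
def nodesD : List ℕ → ℕ
  | [] => 0
  | a :: t =>
      1 + (if t = [] then 0 else nodesD (Subpart (a :: t) 1 0))
        + (if a ≤ 1 then 0 else nodesD (Subpart (a :: t) 0 1))
  termination_by l => l.sum + l.length
  decreasing_by
  · exact subpart10_lt a t
  · exact subpart01_lt a t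

/-- Number of leaves in the game tree of Downright (junk value `0` on `[]`). -/
def leavesD : List ℕ → ℕ
  | [] => 0
  | a :: t =>
      if t = [] ∧ a ≤ 1 then 1
      else (if t = [] then 0 else leavesD (Subpart (a :: t) 1 0))
        + (if a ≤ 1 then 0 else leavesD (Subpart (a :: t) 0 1))
  termination_by l => l.sum + l.length
  decreasing_by
  · exact subpart10_lt a t
  · exact subpart01_lt a t

/-- The staircase partition `(n, n-1, …, 1)`. -/
def staircase (n : ℕ) : List ℕ := (List.range n).map (fun k => n - k)

/-- The gamma partition `Γ_{r,c} = (c, 1, …, 1)` with `r` parts. -/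
def gammaPart (r c : ℕ) : List ℕ := c :: List.replicate (r - 1) 1

/-- The rectangular partition `R_{r,c} = (c, …, c)` with `r` parts. -/
def rectPart (r c : ℕ) : List ℕ := List.replicate r c

lemma mex_eq' (s : Finset ℕ) (m : ℕ) (h1 : m ∉ s) (h2 : ∀ k < m, k ∈ s) :
    mex s = m := by
  have hmem : m ∈ {n : ℕ | n ∉ s} := h1
  refine le_antisymm (Nat.sInf_le hmem) ?_
  by_contra h
  push_neg at h
  have := Nat.sInf_mem (⟨m, hmem⟩ : {n : ℕ | n ∉ s}.Nonempty)
  exact this (h2 _ h)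

lemma SGL_nil : SGL [] = 0 := by rw [SGL]

lemma SGL_cons (a : ℕ) (t : List ℕ) :
    SGL (a :: t) = mex {SGL (Subpart (a :: t) 1 0), SGL (Subpart (a :: t) 0 1)} := by
  rw [SGL]

lemma SGL_one_row (n : ℕ) (hn : 1 ≤ n) : SGL [n] = if Even n then 2 else 1 := by
  induction n with
  | zero => omega
  | succ k ih =>
    rw [SGL_cons]
    have h10 : Subpart [k + 1] 1 0 = [] := by simp [Subpart]
    rcases Nat.eq_zero_or_pos k with hk | hk
    · subst hk
      have h01 : Subpart [1] 0 1 = [] := by simp [Subpart]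
      rw [h10, h01, SGL_nil, if_neg (by decide)]
      exact mex_eq' _ 1 (by decide) (by decide)
    · have h01 : Subpart [k + 1] 0 1 = [k] := by
        simp [Subpart, List.filter, show k ≠ 0 by omega]
      rw [h10, h01, SGL_nil, ih hk]
      rcases Nat.even_or_odd k with he | ho
      · rw [if_pos he, if_neg (by simp [Nat.even_add_one, he])]
        exact mex_eq' _ 1 (by decide) (by decide)
      · rw [if_neg (Nat.not_even_iff_odd.mpr ho), if_pos (Odd.add_one ho)]
        exact mex_eq' _ 2 (by decide) (by decide)

lemma SGL_diag (a : ℕ) (ha : 1 ≤ a) : SGL [a, a] = if Even a then 0 else 2 := by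
  induction a with
  | zero => omega
  | succ k ih =>
    rw [SGL_cons]
    have h10 : Subpart [k + 1, k + 1] 1 0 = [k + 1] := by
      simp [Subpart, List.filter]
    rw [h10, SGL_one_row (k + 1) (by omega)]
    rcases Nat.eq_zero_or_pos k with hk | hk
    · subst hk
      have h01 : Subpart [1, 1] 0 1 = [] := by simp [Subpart]
      rw [h01, SGL_nil, if_neg (by decide), if_neg (by decide)]
      exact mex_eq' _ 2 (by decide) (by decide)
    · have h01 : Subpart [k + 1, k + 1] 0 1 = [k, k] := by
        simp [Subpart, List.filter, show k ≠ 0 by omega]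
      rw [h01, ih hk]
      rcases Nat.even_or_odd k with he | ho
      · have h1 : ¬ Even (k + 1) := by simp [Nat.even_add_one, he]
        rw [if_pos he, if_neg h1, if_neg h1]
        exact mex_eq' _ 2 (by decide) (by decide)
      · have h1 : Even (k + 1) := Odd.add_one ho
        rw [if_neg (Nat.not_even_iff_odd.mpr ho), if_pos h1, if_pos h1]
        exact mex_eq' _ 0 (by decide) (by decide)

lemma SGL_offdiag : ∀ b a : ℕ, b < a → 1 ≤ b →
    SGL [a, b] = if Odd b then 0 else 1 := by
  intro b
  induction b with
  | zero => omega
  | succ k ih =>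
    intro a hba hb
    rw [SGL_cons]
    have h10 : Subpart [a, k + 1] 1 0 = [k + 1] := by
      simp [Subpart, List.filter]
    rw [h10, SGL_one_row (k + 1) (by omega)]
    rcases Nat.eq_zero_or_pos k with hk | hk
    · subst hk
      have h01 : Subpart [a, 1] 0 1 = [a - 1] := by
        simp [Subpart, List.filter, show a - 1 ≠ 0 by omega]
      rw [h01, SGL_one_row (a - 1) (by omega),
        if_pos (show Odd (0 + 1) by decide)]
      rcases Nat.even_or_odd (a - 1) with he | ho
      · rw [if_pos (show Even (a - 1) from he),
          if_neg (show ¬ Even (0 + 1) by decide)]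
        exact mex_eq' _ 0 (by decide) (by decide)
      · rw [if_neg (show ¬ Even (a - 1) from Nat.not_even_iff_odd.mpr ho),
          if_neg (show ¬ Even (0 + 1) by decide)]
        exact mex_eq' _ 0 (by decide) (by decide)
    · have h01 : Subpart [a, k + 1] 0 1 = [a - 1, k] := by
        simp [Subpart, List.filter, show k ≠ 0 by omega, show a - 1 ≠ 0 by omega]
      rw [h01, ih (a - 1) (by omega) hk]
      rcases Nat.even_or_odd k with he | ho
      · have hko : Odd (k + 1) := Even.add_one he
        rw [if_neg (show ¬ Even (k + 1) from Nat.not_even_iff_odd.mpr hko),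
          if_neg (show ¬ Odd k from Nat.not_odd_iff_even.mpr he),
          if_pos (show Odd (k + 1) from hko)]
        exact mex_eq' _ 0 (by decide) (by decide)
      · have hke : Even (k + 1) := Odd.add_one ho
        rw [if_pos (show Even (k + 1) from hke), if_pos (show Odd k from ho),
          if_neg (show ¬ Odd (k + 1) from Nat.not_odd_iff_even.mpr hke)]
        exact mex_eq' _ 1 (by decide) (by decide)

/-- Sprague–Grundy values of two-row LCTR games. -/
theorem stmt10 (a b : ℕ) (hab : b ≤ a) (hb : 1 ≤ b) :
    (a = b → SGL [a, b] = if Even a then 0 else 2) ∧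
    (b < a → SGL [a, b] = if Odd b then 0 else 1) := by
  constructor
  · intro h; subst h; exact SGL_diag a (by omega)
  · intro h; exact SGL_offdiag b a h hb
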